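/- arXiv:2006.07846 — 7 statements merged into one kernel-verified Lean document; each statement's English description precedes it below -/
import Mathlib

section
/- For every n×n permutation matrix P and every X ∈ ℝ^{n×d}, the normalization is permutation invariant, η(PX) = η(X), and the Low-Rank Global Attention module is permutation equivariant, LRGA(PX) = P · LRGA(X). -/
open scoped BigOperators Matrix

/-- Apply a feature map `m : ℝ^d → ℝ^κ` to every row of `X ∈ ℝ^{n×d}`. -/
noncomputable def rowMap {n d κ : ℕ} (m : (Fin d → ℝ) → (Fin κ → ℝ))
    (X : Matrix (Fin n) (Fin d) ℝ) : Matrix (Fin n) (Fin κ) ℝ :=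
  Matrix.of fun i => m (X i)

/-- The normalization `η(X) = (1/n) (𝟙ᵀ m₁(X)) (m₂(X)ᵀ 𝟙)`. -/
noncomputable def eta {n d κ : ℕ} (m₁ m₂ : (Fin d → ℝ) → (Fin κ → ℝ))
    (X : Matrix (Fin n) (Fin d) ℝ) : ℝ :=
  (1 / (n : ℝ)) * ∑ c, (∑ i, rowMap m₁ X i c) * (∑ i, rowMap m₂ X i c)

/-- The Low-Rank Global Attention module
`LRGA(X) = [η(X)⁻¹ ⬝ m₁(X) (m₂(X)ᵀ m₃(X)), m₄(X)] ∈ ℝ^{n×2κ}`. -/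
noncomputable def lrga {n d κ : ℕ} (m₁ m₂ m₃ m₄ : (Fin d → ℝ) → (Fin κ → ℝ))
    (X : Matrix (Fin n) (Fin d) ℝ) : Matrix (Fin n) (Fin (κ + κ)) ℝ :=
  Matrix.of fun i => Fin.append
    (((eta m₁ m₂ X)⁻¹ • (rowMap m₁ X * ((rowMap m₂ X)ᵀ * rowMap m₃ X))) i)
    (rowMap m₄ X i)

lemma rowMap_submatrix {n d κ : ℕ} (m : (Fin d → ℝ) → (Fin κ → ℝ))
    (σ : Equiv.Perm (Fin n)) (X : Matrix (Fin n) (Fin d) ℝ) :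
    rowMap m (X.submatrix σ id) = (rowMap m X).submatrix σ id := by
  ext i j
  simp only [rowMap, Matrix.of_apply, Matrix.submatrix_apply]
  congr 1

/-- For every permutation matrix `P` the normalization is invariant, `η(PX) = η(X)`,
and LRGA is permutation equivariant, `LRGA(PX) = P ⬝ lrga X`. -/
theorem lrga_permutation_equivariant (n d κ : ℕ) (hn : 1 ≤ n)
    (m₁ m₂ m₃ m₄ : (Fin d → ℝ) → (Fin κ → ℝ))
    (σ : Equiv.Perm (Fin n)) (X : Matrix (Fin n) (Fin d) ℝ) :
    eta m₁ m₂ (σ.permMatrix ℝ * X) = eta m₁ m₂ X ∧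
      lrga m₁ m₂ m₃ m₄ (σ.permMatrix ℝ * X) =
        σ.permMatrix ℝ * lrga m₁ m₂ m₃ m₄ X := by
  have hP : ∀ {k : ℕ} (M : Matrix (Fin n) (Fin k) ℝ),
      σ.permMatrix ℝ * M = M.submatrix σ id := fun M => by
    rw [Equiv.Perm.permMatrix, PEquiv.toMatrix_toPEquiv_mul]
  rw [hP, hP]
  have heta : eta m₁ m₂ (X.submatrix σ id) = eta m₁ m₂ X := by
    unfold eta
    rw [rowMap_submatrix, rowMap_submatrix]
    congr 1
    refine Finset.sum_congr rfl fun c _ => ?_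
    have h1 : ∑ i, (rowMap m₁ X).submatrix σ id i c = ∑ i, rowMap m₁ X i c := by
      simp only [Matrix.submatrix_apply, id]
      exact Equiv.sum_comp σ (fun i => rowMap m₁ X i c)
    have h2 : ∑ i, (rowMap m₂ X).submatrix σ id i c = ∑ i, rowMap m₂ X i c := by
      simp only [Matrix.submatrix_apply, id]
      exact Equiv.sum_comp σ (fun i => rowMap m₂ X i c)
    rw [h1, h2]
  refine ⟨heta, ?_⟩
  have hmul : (rowMap m₂ (X.submatrix σ id))ᵀ * rowMap m₃ (X.submatrix σ id)
      = (rowMap m₂ X)ᵀ * rowMap m₃ X := by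
    rw [rowMap_submatrix, rowMap_submatrix]
    ext a b
    simp only [Matrix.mul_apply, Matrix.transpose_apply, Matrix.submatrix_apply, id]
    exact Equiv.sum_comp σ (fun i => rowMap m₂ X i a * rowMap m₃ X i b)
  ext i j
  simp only [lrga, Matrix.submatrix_apply, Matrix.of_apply, id]
  rw [heta, hmul, rowMap_submatrix, rowMap_submatrix]
  congr 1
end

section
/- For every t > 0, P( there exist i, j ∈ {1,…,n} with |(1/d)(RRᵀ)_{ij} − I_{ij}| ≥ t ) ≤ 2n²·exp(−2dt²/M⁴). -/
open scoped BigOperators Matrix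
open MeasureTheory ProbabilityTheory

/-!
For fixed `i, j` the entry `(1/d)(RRᵀ)ᵢⱼ - Iᵢⱼ` is the average of the `d` centred variables
`Rᵢₗ Rⱼₗ - δᵢⱼ`, which take values in an interval of length `M²/2`. They are independent because
they are functions of the pairwise disjoint blocks `{(i, l), (j, l)}` of the independent entries,
so Hoeffding's inequality bounds the probability of a deviation `≥ t` by `2 exp(-8dt²/M⁴)`.
A union bound over the `n²` entries concludes.
-/

open Real
open scoped NNReal

namespace ProbabilityTheory

variable {Ω : Type*} {mΩ : MeasurableSpace Ω} {μ : Measure Ω}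

lemma HasSubgaussianMGF.measure_le_abs_le {X : Ω → ℝ} {c : ℝ≥0} (h : HasSubgaussianMGF X c μ)
    {ε : ℝ} (hε : 0 ≤ ε) :
    μ {ω | ε ≤ |X ω|} ≤ ENNReal.ofReal (2 * exp (-ε ^ 2 / (2 * c))) := by
  have : IsFiniteMeasure μ :=
    (integrable_const_iff_isFiniteMeasure one_ne_zero).1 (by simpa using h.integrable_exp_mul 0)
  have h_tail : ∀ {Y : Ω → ℝ}, HasSubgaussianMGF Y c μ →
      μ {ω | ε ≤ Y ω} ≤ ENNReal.ofReal (exp (-ε ^ 2 / (2 * c))) := fun hY ↦ by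
    rw [← ofReal_measureReal]
    exact ENNReal.ofReal_le_ofReal (hY.measure_ge_le hε)
  calc μ {ω | ε ≤ |X ω|} ≤ μ ({ω | ε ≤ X ω} ∪ {ω | ε ≤ (-X) ω}) :=
        measure_mono fun ω (hω : ε ≤ |X ω|) ↦ le_abs.1 hω
    _ ≤ μ {ω | ε ≤ X ω} + μ {ω | ε ≤ (-X) ω} := measure_union_le _ _
    _ ≤ ENNReal.ofReal (exp (-ε ^ 2 / (2 * c))) + ENNReal.ofReal (exp (-ε ^ 2 / (2 * c))) :=
        add_le_add (h_tail h) (h_tail h.neg)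
    _ = ENNReal.ofReal (2 * exp (-ε ^ 2 / (2 * c))) := by
        rw [← ENNReal.ofReal_add (by positivity) (by positivity), ← two_mul]

/-- Two-sided **Hoeffding inequality**. -/
lemma measure_le_abs_sum_sub_integral_le {ι : Type*} {Y : ι → Ω → ℝ} (h_indep : iIndepFun Y μ)
    (h_meas : ∀ l, AEMeasurable (Y l) μ) {a b : ℝ} (h_mem : ∀ l, ∀ᵐ ω ∂μ, Y l ω ∈ Set.Icc a b)
    (s : Finset ι) {ε : ℝ} (hε : 0 ≤ ε) :
    μ {ω | ε ≤ |∑ l ∈ s, (Y l ω - μ[Y l])|}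
      ≤ ENNReal.ofReal (2 * exp (-2 * ε ^ 2 / (s.card * (b - a) ^ 2))) := by
  have := h_indep.isProbabilityMeasure
  have h_sum := HasSubgaussianMGF.sum_of_iIndepFun (s := s)
    (h_indep.comp (fun (l : ι) (y : ℝ) ↦ y - ∫ ω, Y l ω ∂μ) fun _ ↦ measurable_id.sub_const _)
    fun l _ ↦ hasSubgaussianMGF_of_mem_Icc (h_meas l) (h_mem l)
  refine (h_sum.measure_le_abs_le hε).trans_eq ?_
  congr 3
  push_cast [Finset.sum_const, nsmul_eq_mul, coe_nnnorm, Real.norm_eq_abs, div_pow, sq_abs]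
  field_simp

lemma iIndep.iIndep_biSup {ι κ : Type*} {m : ι → MeasurableSpace Ω} (h_le : ∀ i, m i ≤ mΩ)
    (h : iIndep m μ) {B : κ → Set ι} (hB : Pairwise fun k k' ↦ Disjoint (B k) (B k')) :
    iIndep (fun k ↦ ⨆ i ∈ B k, m i) μ := by
  classical
  have := h.isProbabilityMeasure
  rw [iIndep_iff]
  intro s
  induction s using Finset.induction_on with
  | empty => simp
  | insert a s ha ih =>
    intro f hf
    have h_indep : Indep (⨆ i ∈ B a, m i) (⨆ i ∈ ⋃ k ∈ s, B k, m i) μ :=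
      indep_iSup_of_disjoint h_le h <| Set.disjoint_iUnion₂_right.2 fun k hk ↦
        hB (ne_of_mem_of_not_mem hk ha).symm
    have h_rest : MeasurableSet[⨆ i ∈ ⋃ k ∈ s, B k, m i] (⋂ k ∈ s, f k) :=
      .biInter s.countable_toSet fun k hk ↦
        MeasurableSpace.le_def.1 (biSup_mono fun i hi ↦ Set.mem_biUnion hk hi) _
          (hf k (Finset.mem_insert_of_mem hk))
    rw [Finset.set_biInter_insert, Finset.prod_insert ha,
      ← ih fun k hk ↦ hf k (Finset.mem_insert_of_mem hk)]
    exact (Indep_iff _ _ _).1 h_indep _ _ (hf a (Finset.mem_insert_self a s)) h_rest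

lemma iIndepFun.iIndepFun_mul_of_prod {ι κ : Type*} {X : ι × κ → Ω → ℝ} (hX : iIndepFun X μ)
    (hmeas : ∀ p, Measurable (X p)) (i j : ι) :
    iIndepFun (fun l ω ↦ X (i, l) ω * X (j, l) ω) μ := by
  rw [iIndepFun_iff_iIndep] at hX ⊢
  have hB : Pairwise fun l l' : κ ↦
      Disjoint ({(i, l), (j, l)} : Set (ι × κ)) {(i, l'), (j, l')} := by
    intro l l' hll'
    simp [Set.disjoint_left, hll']
  refine iIndep_of_iIndep_of_le (hX.iIndep_biSup (fun p ↦ (hmeas p).comap_le) hB) fun l ↦ ?_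
  refine Measurable.comap_le (Measurable.mul ?_ ?_) <;>
    exact measurable_iff_comap_le.2 (le_biSup (fun p ↦ MeasurableSpace.comap (X p) _) (by simp))

end ProbabilityTheory

section GramMatrix

variable {Ω : Type*} {mΩ : MeasurableSpace Ω} {μ : Measure Ω} {m k : Type*} [DecidableEq m]

lemma one_div_card_mul_mul_transpose_sub_one_apply [Fintype k] [Nonempty k] (A : Matrix m k ℝ)
    (i j : m) :
    1 / (Fintype.card k : ℝ) * (A * Aᵀ) i j - (1 : Matrix m m ℝ) i j
      = (∑ l, (A i l * A j l - (1 : Matrix m m ℝ) i j)) / Fintype.card k := by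
  simp only [Matrix.mul_apply, Matrix.transpose_apply, Finset.sum_sub_distrib, Finset.sum_const,
    Finset.card_univ, nsmul_eq_mul]
  field_simp

lemma integral_mul_apply_eq_one_apply {R : Ω → Matrix m k ℝ}
    (hmeas : ∀ i l, Measurable fun ω ↦ R ω i l)
    (hindep : iIndepFun (fun (p : m × k) ω ↦ R ω p.1 p.2) μ)
    (hmean : ∀ i l, ∫ ω, R ω i l ∂μ = 0) (hvar : ∀ i l, ∫ ω, R ω i l ^ 2 ∂μ = 1)
    (i j : m) (l : k) :
    ∫ ω, R ω i l * R ω j l ∂μ = (1 : Matrix m m ℝ) i j := by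
  obtain rfl | hij := eq_or_ne i j
  · simpa [← sq] using hvar i l
  have h_indep : IndepFun (fun ω ↦ R ω i l) (fun ω ↦ R ω j l) μ :=
    hindep.indepFun (i := (i, l)) (j := (j, l)) (by simp [hij])
  rw [h_indep.integral_fun_mul_eq_mul_integral (hmeas i l).aestronglyMeasurable
    (hmeas j l).aestronglyMeasurable, hmean, Matrix.one_apply_ne hij, zero_mul]

lemma measure_le_abs_gram_sub_one_apply_le [Fintype k] [Nonempty k] {R : Ω → Matrix m k ℝ}
    {M : ℝ} (hmeas : ∀ i l, Measurable fun ω ↦ R ω i l)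
    (hindep : iIndepFun (fun (p : m × k) ω ↦ R ω p.1 p.2) μ)
    (hmean : ∀ i l, ∫ ω, R ω i l ∂μ = 0) (hvar : ∀ i l, ∫ ω, R ω i l ^ 2 ∂μ = 1)
    (hbound : ∀ i l, ∀ᵐ ω ∂μ, |R ω i l| ≤ M / 2) (i j : m) {t : ℝ} (ht : 0 ≤ t) :
    μ {ω | t ≤ |1 / (Fintype.card k : ℝ) * (R ω * (R ω)ᵀ) i j - (1 : Matrix m m ℝ) i j|}
      ≤ ENNReal.ofReal (2 * exp (-8 * Fintype.card k * t ^ 2 / M ^ 4)) := by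
  have hc : 0 < (Fintype.card k : ℝ) := by positivity
  have h_set :
      {ω | t ≤ |1 / (Fintype.card k : ℝ) * (R ω * (R ω)ᵀ) i j - (1 : Matrix m m ℝ) i j|}
        = {ω | Fintype.card k * t ≤
            |∑ l, (R ω i l * R ω j l - ∫ ω', R ω' i l * R ω' j l ∂μ)|} := by
    simp_rw [integral_mul_apply_eq_one_apply hmeas hindep hmean hvar,
      one_div_card_mul_mul_transpose_sub_one_apply, abs_div, Nat.abs_cast, le_div_iff₀ hc,
      mul_comm]
  have h_mem : ∀ l, ∀ᵐ ω ∂μ, R ω i l * R ω j l ∈ Set.Icc (-(M / 2) ^ 2) ((M / 2) ^ 2) := by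
    intro l
    filter_upwards [hbound i l, hbound j l] with ω hi hj
    rw [Set.mem_Icc, ← abs_le, abs_mul, sq]
    exact mul_le_mul hi hj (abs_nonneg _) ((abs_nonneg _).trans hi)
  rw [h_set]
  refine (measure_le_abs_sum_sub_integral_le
    (hindep.iIndepFun_mul_of_prod (fun p ↦ hmeas _ _) i j)
    (fun l ↦ ((hmeas i l).mul (hmeas j l)).aemeasurable) h_mem Finset.univ
    (by positivity)).trans_eq ?_
  congr 3
  simp only [Finset.card_univ]
  field_simp
  ring

end GramMatrix

theorem gram_concentration_union_bound_general
    {Ω : Type*} [MeasureSpace Ω] [IsProbabilityMeasure (volume : Measure Ω)]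
    (n d : ℕ) (hd : 1 ≤ d) (M : ℝ)
    (R : Ω → Matrix (Fin n) (Fin d) ℝ)
    (hmeas : ∀ i l, Measurable fun ω => R ω i l)
    (hindep : iIndepFun
      (fun (p : Fin n × Fin d) ω => R ω p.1 p.2) volume)
    (hmean : ∀ i l, ∫ ω, R ω i l = 0)
    (hvar : ∀ i l, ∫ ω, (R ω i l) ^ 2 = 1)
    (hbound : ∀ i l, ∀ᵐ ω, |R ω i l| ≤ M / 2)
    (t : ℝ) (ht : 0 < t) :
    volume {ω | ∃ i j : Fin n,
        t ≤ |(1 / (d : ℝ)) * (R ω * (R ω)ᵀ) i j - (1 : Matrix (Fin n) (Fin n) ℝ) i j|}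
      ≤ ENNReal.ofReal (2 * n ^ 2 * Real.exp (-2 * d * t ^ 2 / M ^ 4)) := by
  have : Nonempty (Fin d) := ⟨⟨0, hd⟩⟩
  have h_entry := fun i j ↦
    measure_le_abs_gram_sub_one_apply_le hmeas hindep hmean hvar hbound i j ht.le
  simp only [Fintype.card_fin] at h_entry
  have h_weaken : -8 * d * t ^ 2 / M ^ 4 ≤ -2 * d * t ^ 2 / M ^ 4 := by
    gcongr
    nlinarith [sq_nonneg t, (Nat.cast_nonneg d : (0 : ℝ) ≤ d)]
  simp only [Set.ofPred_exists]
  refine (measure_iUnion_fintype_le _ _).trans <|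
    (Finset.sum_le_sum fun i _ ↦ measure_iUnion_fintype_le _ _).trans ?_
  calc _ ≤ ∑ _i : Fin n, ∑ _j : Fin n, ENNReal.ofReal (2 * exp (-2 * d * t ^ 2 / M ^ 4)) := by
        gcongr with i _ j _
        exact (h_entry i j).trans <| ENNReal.ofReal_le_ofReal <|
          mul_le_mul_of_nonneg_left (exp_le_exp.2 h_weaken) zero_le_two
    _ = ENNReal.ofReal (2 * n ^ 2 * exp (-2 * d * t ^ 2 / M ^ 4)) := by
        simp only [Finset.sum_const, Finset.card_univ, Fintype.card_fin, nsmul_eq_mul]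
        rw [← ENNReal.ofReal_natCast, ← ENNReal.ofReal_mul (by positivity),
          ← ENNReal.ofReal_mul (by positivity)]
        ring_nf

/-- Union bound over all entries: for entries `R_{il}` that are independent, mean zero,
variance one and bounded by `M/2` a.s.,
`P(∃ i j, |(1/d)(R Rᵀ)_{ij} − I_{ij}| ≥ t) ≤ 2 n² exp(−2 d t² / M⁴)`. -/
theorem gram_concentration_union_bound
    {Ω : Type*} [MeasureSpace Ω] [IsProbabilityMeasure (volume : Measure Ω)]
    (n d : ℕ) (hn : 1 ≤ n) (hd : 1 ≤ d) (M : ℝ) (hM : 0 < M)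
    (R : Ω → Matrix (Fin n) (Fin d) ℝ)
    (hmeas : ∀ i l, Measurable fun ω => R ω i l)
    (hindep : iIndepFun
      (fun (p : Fin n × Fin d) ω => R ω p.1 p.2) volume)
    (hmean : ∀ i l, ∫ ω, R ω i l = 0)
    (hvar : ∀ i l, ∫ ω, (R ω i l) ^ 2 = 1)
    (hbound : ∀ i l, ∀ᵐ ω, |R ω i l| ≤ M / 2)
    (t : ℝ) (ht : 0 < t) :
    volume {ω | ∃ i j : Fin n,
        t ≤ |(1 / (d : ℝ)) * (R ω * (R ω)ᵀ) i j - (1 : Matrix (Fin n) (Fin n) ℝ) i j|}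
      ≤ ENNReal.ofReal (2 * n ^ 2 * Real.exp (-2 * d * t ^ 2 / M ^ 4)) :=
  gram_concentration_union_bound_general n d hd M R hmeas hindep hmean hvar hbound t ht
end

section
/- For every t > 0 and every δ ∈ (0,1), if d ≥ (M⁴/(2t²))·log(2n²/δ), then P( there exist i, j ∈ {1,…,n} with |(1/d)(RRᵀ)_{ij} − I_{ij}| ≥ t ) ≤ δ. -/
/-! Each entry of `(1/d) R Rᵀ - I` is an average of `d` independent, centered terms
`R_{il} R_{jl} - δ_{ij}` with values in an interval of length `M²/2`; independence across `l` holds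
because the columns of `R` are independent. Hoeffding's inequality bounds the probability of each
of the `n²` deviations by `2 exp(-8dt²/M⁴)`, which the hypothesis on `d` makes at most `δ/n²`,
and a union bound concludes. -/

open scoped BigOperators Matrix NNReal
open MeasureTheory ProbabilityTheory Real

namespace ProbabilityTheory

variable {Ω ι κ 𝓧 : Type*} {mΩ : MeasurableSpace Ω} {μ : Measure Ω}

lemma iIndepFun.curry {m𝓧 : MeasurableSpace 𝓧} {X : ι → κ → Ω → 𝓧}
    (mX : ∀ i j, Measurable (X i j)) (h : iIndepFun (fun (p : ι × κ) ω ↦ X p.1 p.2 ω) μ) :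
    iIndepFun (fun i ω ↦ (X i · ω)) μ := by
  have := h.isProbabilityMeasure
  have _ i j := Measure.isProbabilityMeasure_map (μ := μ) (mX i j).aemeasurable
  have hrow (i : ι) : μ.map (fun ω j ↦ X i j ω) = Measure.infinitePi fun j ↦ μ.map (X i j) :=
    (h.precomp (Prod.mk_right_injective i)).map_fun_eq_infinitePi_map (mX i)
  have hall : μ.map (fun ω (p : ι × κ) ↦ X p.1 p.2 ω) =
      Measure.infinitePi fun p : ι × κ ↦ μ.map (X p.1 p.2) :=
    h.map_fun_eq_infinitePi_map fun p ↦ mX p.1 p.2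
  rw [iIndepFun_iff_map_fun_eq_infinitePi_map (fun i ↦ measurable_pi_lambda _ (mX i)),
    funext hrow, ← Measure.infinitePi_map_curry, ← hall,
    Measure.map_map (by fun_prop) (by fun_prop)]
  rfl

lemma HasSubgaussianMGF.measureReal_abs_ge_le {X : Ω → ℝ} {c : ℝ≥0}
    (h : HasSubgaussianMGF X c μ) {ε : ℝ} (hε : 0 ≤ ε) :
    μ.real {ω | ε ≤ |X ω|} ≤ 2 * exp (-ε ^ 2 / (2 * c)) := by
  have hsplit : {ω | ε ≤ |X ω|} = {ω | ε ≤ X ω} ∪ {ω | ε ≤ (-X) ω} := by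
    ext ω
    simp [le_abs]
  rw [hsplit]
  linarith [measureReal_union_le (μ := μ) {ω | ε ≤ X ω} {ω | ε ≤ (-X) ω},
    h.measure_ge_le hε, h.neg.measure_ge_le hε]

lemma measureReal_abs_sum_sub_integral_ge_le {X : ι → Ω → ℝ} (hindep : iIndepFun X μ)
    (hmeas : ∀ i, Measurable (X i)) {a b : ℝ} (hab : ∀ i, ∀ᵐ ω ∂μ, X i ω ∈ Set.Icc a b)
    (s : Finset ι) {ε : ℝ} (hε : 0 ≤ ε) :
    μ.real {ω | ε ≤ |∑ i ∈ s, (X i ω - μ[X i])|} ≤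
      2 * exp (-ε ^ 2 / (2 * (s.card * ((b - a) / 2) ^ 2))) := by
  have := hindep.isProbabilityMeasure
  have hcentered : iIndepFun (fun i ω ↦ X i ω - μ[X i]) μ :=
    hindep.comp (fun i y ↦ y - ∫ ω, X i ω ∂μ) fun i ↦ measurable_id.sub_const _
  have hsum := HasSubgaussianMGF.sum_of_iIndepFun hcentered (s := s)
    fun i _ ↦ hasSubgaussianMGF_of_mem_Icc (hmeas i).aemeasurable (hab i)
  refine (hsum.measureReal_abs_ge_le hε).trans_eq ?_
  simp [div_pow]

end ProbabilityTheory

lemma MeasureTheory.measureReal_setOf_exists_exists_le {α ι ι' : Type*} [Fintype ι] [Fintype ι']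
    {m : MeasurableSpace α} (μ : Measure α) (P : ι → ι' → α → Prop) {b : ℝ}
    (h : ∀ i j, μ.real {x | P i j x} ≤ b) :
    μ.real {x | ∃ i j, P i j x} ≤ Fintype.card ι * Fintype.card ι' * b := by
  calc μ.real {x | ∃ i j, P i j x} = μ.real (⋃ i, ⋃ j, {x | P i j x}) := by
        simp only [Set.ofPred_exists]
    _ ≤ ∑ i, ∑ j, μ.real {x | P i j x} :=
        (measureReal_iUnion_fintype_le _).trans
          (Finset.sum_le_sum fun i _ ↦ measureReal_iUnion_fintype_le _)
    _ ≤ ∑ _i : ι, ∑ _j : ι', b := by gcongr with i _ j _; exact h i j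
    _ = Fintype.card ι * Fintype.card ι' * b := by simp [mul_assoc]

namespace Matrix

variable {ι κ : Type*} [Fintype κ] [DecidableEq ι]

lemma one_div_card_mul_mul_transpose_sub_one_apply [Nonempty κ] (A : Matrix ι κ ℝ) (i j : ι) :
    1 / (Fintype.card κ : ℝ) * (A * Aᵀ) i j - (1 : Matrix ι ι ℝ) i j =
      (∑ l, (A i l * A j l - (1 : Matrix ι ι ℝ) i j)) / Fintype.card κ := by
  have : (Fintype.card κ : ℝ) ≠ 0 := Nat.cast_ne_zero.mpr Fintype.card_ne_zero
  simp only [mul_apply, transpose_apply, Finset.sum_sub_distrib, Finset.sum_const,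
    Finset.card_univ, nsmul_eq_mul]
  field_simp

end Matrix

namespace ProbabilityTheory

variable {Ω ι κ : Type*} {mΩ : MeasurableSpace Ω} {μ : Measure Ω}
  {R : Ω → Matrix ι κ ℝ}

lemma iIndepFun_mul_apply_of_iIndepFun_apply (hmeas : ∀ i l, Measurable fun ω ↦ R ω i l)
    (hindep : iIndepFun (fun (p : ι × κ) ω ↦ R ω p.1 p.2) μ) (i j : ι) :
    iIndepFun (fun l ω ↦ R ω i l * R ω j l) μ :=
  ((hindep.precomp Prod.swap_injective).curry (X := fun l i ω ↦ R ω i l)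
    fun l i ↦ hmeas i l).comp (fun _ v ↦ v i * v j) fun _ ↦ by fun_prop

lemma integral_mul_apply_eq_one_apply [DecidableEq ι] (hmeas : ∀ i l, Measurable fun ω ↦ R ω i l)
    (hindep : iIndepFun (fun (p : ι × κ) ω ↦ R ω p.1 p.2) μ)
    (hmean : ∀ i l, ∫ ω, R ω i l ∂μ = 0) (hvar : ∀ i l, ∫ ω, (R ω i l) ^ 2 ∂μ = 1)
    (i j : ι) (l : κ) :
    ∫ ω, R ω i l * R ω j l ∂μ = (1 : Matrix ι ι ℝ) i j := by
  by_cases hij : i = j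
  · subst hij
    simpa [← sq] using hvar i l
  · have hne : (i, l) ≠ (j, l) := by simp [hij]
    have := (hindep.indepFun hne).integral_mul_eq_mul_integral
      (hmeas i l).aestronglyMeasurable (hmeas j l).aestronglyMeasurable
    simpa [Matrix.one_apply_ne hij, hmean] using this

lemma measureReal_abs_gram_apply_sub_one_ge_le [Fintype κ] [Nonempty κ] [DecidableEq ι]
    (hmeas : ∀ i l, Measurable fun ω ↦ R ω i l)
    (hindep : iIndepFun (fun (p : ι × κ) ω ↦ R ω p.1 p.2) μ)
    (hmean : ∀ i l, ∫ ω, R ω i l ∂μ = 0) (hvar : ∀ i l, ∫ ω, (R ω i l) ^ 2 ∂μ = 1)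
    {c : ℝ} (hbound : ∀ i l, ∀ᵐ ω ∂μ, |R ω i l| ≤ c) {t : ℝ} (ht : 0 ≤ t) (i j : ι) :
    μ.real {ω | t ≤ |1 / (Fintype.card κ : ℝ) * (R ω * (R ω)ᵀ) i j - (1 : Matrix ι ι ℝ) i j|} ≤
      2 * exp (-(Fintype.card κ * t ^ 2) / (2 * c ^ 4)) := by
  have hd : 0 < (Fintype.card κ : ℝ) := Nat.cast_pos.mpr Fintype.card_pos
  have hprod (l : κ) : ∀ᵐ ω ∂μ, R ω i l * R ω j l ∈ Set.Icc (-c ^ 2) (c ^ 2) := by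
    filter_upwards [hbound i l, hbound j l] with ω hi hj
    rw [Set.mem_Icc, ← abs_le, abs_mul, sq]
    exact mul_le_mul hi hj (abs_nonneg _) ((abs_nonneg _).trans hi)
  have hevent (ω : Ω) :
      t ≤ |1 / (Fintype.card κ : ℝ) * (R ω * (R ω)ᵀ) i j - (1 : Matrix ι ι ℝ) i j| ↔
        Fintype.card κ * t ≤ |∑ l, (R ω i l * R ω j l - ∫ ω', R ω' i l * R ω' j l ∂μ)| := by
    rw [Matrix.one_div_card_mul_mul_transpose_sub_one_apply, abs_div, abs_of_pos hd,
      le_div_iff₀ hd, mul_comm t]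
    simp only [integral_mul_apply_eq_one_apply hmeas hindep hmean hvar]
  simp only [hevent]
  refine (measureReal_abs_sum_sub_integral_ge_le (iIndepFun_mul_apply_of_iIndepFun_apply hmeas
    hindep i j) (fun l ↦ (hmeas i l).mul (hmeas j l)) hprod Finset.univ (by positivity)).trans_eq ?_
  rw [Finset.card_univ]
  congr 2
  field_simp
  ring

end ProbabilityTheory

lemma two_mul_exp_neg_le_div_sq_of_log_le {n d : ℕ} {M t δ : ℝ} (hn : 1 ≤ n) (hM : 0 < M)
    (ht : 0 < t) (hδ : 0 < δ) (hd : M ^ 4 / (2 * t ^ 2) * log (2 * n ^ 2 / δ) ≤ d) :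
    2 * exp (-(d * t ^ 2) / (2 * (M / 2) ^ 4)) ≤ δ / n ^ 2 := by
  have hlog : log (2 * n ^ 2 / δ) ≤ 2 * (d * t ^ 2 / M ^ 4) := by
    calc log (2 * n ^ 2 / δ)
        = 2 * t ^ 2 / M ^ 4 * (M ^ 4 / (2 * t ^ 2) * log (2 * n ^ 2 / δ)) := by field_simp
      _ ≤ 2 * t ^ 2 / M ^ 4 * d := by gcongr
      _ = 2 * (d * t ^ 2 / M ^ 4) := by ring
  calc 2 * exp (-(d * t ^ 2) / (2 * (M / 2) ^ 4))
      = 2 * exp (-(8 * (d * t ^ 2 / M ^ 4))) := by ring_nf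
    _ ≤ 2 * exp (-log (2 * n ^ 2 / δ)) := by
        gcongr
        linarith [show 0 ≤ d * t ^ 2 / M ^ 4 by positivity]
    _ = δ / n ^ 2 := by
        rw [exp_neg, exp_log (by positivity)]
        field_simp

theorem gram_concentration_sample_bound_general
    {Ω : Type*} [MeasureSpace Ω] [IsProbabilityMeasure (volume : Measure Ω)]
    (n d : ℕ) (hn : 1 ≤ n) (hd : 1 ≤ d) (M : ℝ) (hM : 0 < M)
    (R : Ω → Matrix (Fin n) (Fin d) ℝ)
    (hmeas : ∀ i l, Measurable fun ω => R ω i l)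
    (hindep : iIndepFun
      (fun (p : Fin n × Fin d) ω => R ω p.1 p.2) volume)
    (hmean : ∀ i l, ∫ ω, R ω i l = 0)
    (hvar : ∀ i l, ∫ ω, (R ω i l) ^ 2 = 1)
    (hbound : ∀ i l, ∀ᵐ ω, |R ω i l| ≤ M / 2)
    (t : ℝ) (ht : 0 < t) (δ : ℝ) (hδ₀ : 0 < δ)
    (hd' : (M ^ 4 / (2 * t ^ 2)) * Real.log (2 * n ^ 2 / δ) ≤ (d : ℝ)) :
    volume {ω | ∃ i j : Fin n,
        t ≤ |(1 / (d : ℝ)) * (R ω * (R ω)ᵀ) i j - (1 : Matrix (Fin n) (Fin n) ℝ) i j|}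
      ≤ ENNReal.ofReal δ := by
  have : Nonempty (Fin d) := Fin.pos_iff_nonempty.mp hd
  have hentry (i j : Fin n) :
      volume.real {ω | t ≤ |(1 / (d : ℝ)) * (R ω * (R ω)ᵀ) i j - (1 : Matrix _ _ ℝ) i j|} ≤
        δ / n ^ 2 := by
    have := measureReal_abs_gram_apply_sub_one_ge_le hmeas hindep hmean hvar hbound ht.le i j
    rw [Fintype.card_fin] at this
    exact this.trans (two_mul_exp_neg_le_div_sq_of_log_le hn hM ht hδ₀ hd')
  rw [← ofReal_measureReal]
  gcongr
  calc _ ≤ n * n * (δ / n ^ 2) := by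
        simpa using measureReal_setOf_exists_exists_le volume _ hentry
    _ = δ := by field_simp

/-- If `d ≥ (M⁴/(2t²)) log(2n²/δ)` then
`P(∃ i j, |(1/d)(R Rᵀ)_{ij} − I_{ij}| ≥ t) ≤ δ`. -/
theorem gram_concentration_sample_bound
    {Ω : Type*} [MeasureSpace Ω] [IsProbabilityMeasure (volume : Measure Ω)]
    (n d : ℕ) (hn : 1 ≤ n) (hd : 1 ≤ d) (M : ℝ) (hM : 0 < M)
    (R : Ω → Matrix (Fin n) (Fin d) ℝ)
    (hmeas : ∀ i l, Measurable fun ω => R ω i l)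
    (hindep : iIndepFun
      (fun (p : Fin n × Fin d) ω => R ω p.1 p.2) volume)
    (hmean : ∀ i l, ∫ ω, R ω i l = 0)
    (hvar : ∀ i l, ∫ ω, (R ω i l) ^ 2 = 1)
    (hbound : ∀ i l, ∀ᵐ ω, |R ω i l| ≤ M / 2)
    (t : ℝ) (ht : 0 < t) (δ : ℝ) (hδ₀ : 0 < δ) (hδ₁ : δ < 1)
    (hd' : (M ^ 4 / (2 * t ^ 2)) * Real.log (2 * n ^ 2 / δ) ≤ (d : ℝ)) :
    volume {ω | ∃ i j : Fin n,
        t ≤ |(1 / (d : ℝ)) * (R ω * (R ω)ᵀ) i j - (1 : Matrix (Fin n) (Fin n) ℝ) i j|}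
      ≤ ENNReal.ofReal δ :=
  gram_concentration_sample_bound_general n d hn hd M hM R hmeas hindep hmean hvar hbound t ht δ hδ₀
    hd'
end

section
/- For every n×n permutation matrix P, E[ f([PX, R]) ] = P · E[ f([X, R]) ]; that is, a permutation-equivariant network with freshly sampled permutation-invariant random input features is permutation equivariant in expectation. -/
open scoped BigOperators Matrix
open MeasureTheory

instance matrixMeasurableSpace {n m : ℕ} : MeasurableSpace (Matrix (Fin n) (Fin m) ℝ) :=
  inferInstanceAs (MeasurableSpace (Fin n → Fin m → ℝ))

/-- Concatenation of `X ∈ ℝ^{n×d₀}` and `R ∈ ℝ^{n×d}` along the feature (column) dimension. -/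
def concatCols {n d₀ d : ℕ} (X : Matrix (Fin n) (Fin d₀) ℝ)
    (R : Matrix (Fin n) (Fin d) ℝ) : Matrix (Fin n) (Fin (d₀ + d)) ℝ :=
  Matrix.of fun i => Fin.append (X i) (R i)

lemma measurable_concatCols {n d₀ d : ℕ} (X : Matrix (Fin n) (Fin d₀) ℝ) :
    Measurable fun M : Matrix (Fin n) (Fin d) ℝ => concatCols X M := by
  apply measurable_pi_lambda _ fun i => measurable_pi_lambda _ fun j => ?_
  refine Fin.addCases (fun j₁ => ?_) (fun j₂ => ?_) j
  · simp only [concatCols, Matrix.of_apply, Fin.append_left]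
    exact measurable_const
  · simp only [concatCols, Matrix.of_apply, Fin.append_right]
    exact (measurable_pi_apply j₂).comp (measurable_pi_apply i)

lemma measurable_permMul {n m : ℕ} (σ : Equiv.Perm (Fin n)) :
    Measurable fun M : Matrix (Fin n) (Fin m) ℝ => σ.permMatrix ℝ * M := by
  apply measurable_pi_lambda _ fun i => measurable_pi_lambda _ fun j => ?_
  have : (fun M : Matrix (Fin n) (Fin m) ℝ => (σ.permMatrix ℝ * M) i j)
      = fun M => M (σ i) j := by
    funext M
    rw [Equiv.Perm.permMatrix, PEquiv.toMatrix_toPEquiv_mul]; rfl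
  rw [this]
  exact (measurable_pi_apply j).comp (measurable_pi_apply (σ i))

lemma perm_mul_apply {n m : ℕ} (σ : Equiv.Perm (Fin n)) (M : Matrix (Fin n) (Fin m) ℝ)
    (i : Fin n) (j : Fin m) : (σ.permMatrix ℝ * M) i j = M (σ i) j := by
  rw [Equiv.Perm.permMatrix, PEquiv.toMatrix_toPEquiv_mul]; rfl

lemma concatCols_perm {n d₀ d : ℕ} (σ : Equiv.Perm (Fin n))
    (X : Matrix (Fin n) (Fin d₀) ℝ) (M : Matrix (Fin n) (Fin d) ℝ) :
    concatCols (σ.permMatrix ℝ * X) (σ.permMatrix ℝ * M)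
      = σ.permMatrix ℝ * concatCols X M := by
  ext i j
  rw [perm_mul_apply]
  simp only [concatCols, Matrix.of_apply]
  congr 1
  · ext j'; rw [perm_mul_apply]
  · ext j'; rw [perm_mul_apply]

/-- A permutation-equivariant measurable network `f`, fed with freshly sampled random
features `R` whose distribution is invariant under row permutations, is permutation
equivariant in expectation: `E[f([PX, R])] = P · E[f([X, R])]`. -/
theorem equivariant_in_expectation
    {Ω : Type*} [MeasureSpace Ω] [IsProbabilityMeasure (volume : Measure Ω)]
    (n d₀ d k : ℕ) (hn : 1 ≤ n)
    (f : Matrix (Fin n) (Fin (d₀ + d)) ℝ → Matrix (Fin n) (Fin k) ℝ)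
    (hf : Measurable f)
    (hequiv : ∀ (τ : Equiv.Perm (Fin n)) (Z : Matrix (Fin n) (Fin (d₀ + d)) ℝ),
      f (τ.permMatrix ℝ * Z) = τ.permMatrix ℝ * f Z)
    (R : Ω → Matrix (Fin n) (Fin d) ℝ) (hR : Measurable R)
    (hinv : ∀ τ : Equiv.Perm (Fin n),
      Measure.map (fun ω => τ.permMatrix ℝ * R ω) volume = Measure.map R volume)
    (X : Matrix (Fin n) (Fin d₀) ℝ)
    (hint : ∀ i j, Integrable fun ω => f (concatCols X (R ω)) i j)
    (σ : Equiv.Perm (Fin n)) :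
    (Matrix.of fun i j => ∫ ω, f (concatCols (σ.permMatrix ℝ * X) (R ω)) i j)
      = σ.permMatrix ℝ *
        (Matrix.of fun i j => ∫ ω, f (concatCols X (R ω)) i j) := by
  ext i j
  rw [perm_mul_apply]
  simp only [Matrix.of_apply]
  have hmeas : Measurable fun M : Matrix (Fin n) (Fin d) ℝ =>
      f (concatCols (σ.permMatrix ℝ * X) M) i j :=
    ((measurable_pi_apply j).comp ((measurable_pi_apply i).comp
      (hf.comp (measurable_concatCols _))))
  calc (∫ ω, f (concatCols (σ.permMatrix ℝ * X) (R ω)) i j)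
      = ∫ M, f (concatCols (σ.permMatrix ℝ * X) M) i j ∂(Measure.map R volume) := by
        rw [integral_map hR.aemeasurable hmeas.aestronglyMeasurable]
    _ = ∫ M, f (concatCols (σ.permMatrix ℝ * X) M) i j
          ∂(Measure.map (fun ω => σ.permMatrix ℝ * R ω) volume) := by rw [hinv σ]
    _ = ∫ ω, f (concatCols (σ.permMatrix ℝ * X) (σ.permMatrix ℝ * R ω)) i j := by
        exact integral_map ((measurable_permMul σ).comp hR |>.aemeasurable)
          hmeas.aestronglyMeasurable
    _ = ∫ ω, f (concatCols X (R ω)) (σ i) j := by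
        congr 1; funext ω
        rw [concatCols_perm, hequiv, perm_mul_apply]
end

section
/- Assume the B×B matrix V with entries V_{α,β} = ∏_{i=1}^D β_i^{α_i} (with the convention 0⁰ = 1) is invertible. Then for every δ ∈ B there exist real coefficients (a_β)_{β∈B} with ∑_{β∈B} |a_β| ≤ max_{β'∈B} ∑_{α∈B} |(V⁻¹)_{α,β'}| such that for all x ∈ ℝ^D: ∏_{i=1}^D x_i^{δ_i} = ∑_{β∈B} a_β · (⟨β, x⟩ + 1)^n, where ⟨β, x⟩ = ∑_{i=1}^D β_i x_i. In particular every monomial of total degree at most n is a linear combination, with ℓ¹-bounded coefficients depending only on n and D, of the functions x ↦ (⟨β,x⟩+1)^n for β ∈ B. -/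
open scoped BigOperators

/-- The set `B = {β ∈ ℕ^D : β₁ + … + β_D ≤ n}` of multi-indices of total degree at most `n`. -/
def MultiIdx (D n : ℕ) : Type := {β : Fin D → ℕ // ∑ i, β i ≤ n}

noncomputable instance (D n : ℕ) : Fintype (MultiIdx D n) :=
  Fintype.ofInjective
    (fun β : MultiIdx D n => fun i => (⟨β.1 i, by
      have h1 : β.1 i ≤ ∑ j, β.1 j :=
        Finset.single_le_sum (fun _ _ => Nat.zero_le _) (Finset.mem_univ i)
      have h2 := β.2
      omega⟩ : Fin (n + 1)))
    (fun β₁ β₂ h => Subtype.ext (funext fun i => congrArg Fin.val (congrFun h i)))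

instance (D n : ℕ) : DecidableEq (MultiIdx D n) := Subtype.instDecidableEq

instance (D n : ℕ) : Nonempty (MultiIdx D n) := ⟨⟨fun _ => 0, by simp⟩⟩

/-- The multivariate Vandermonde matrix `V_{α,β} = ∏ᵢ (βᵢ)^(αᵢ)` (with `0⁰ = 1`). -/
noncomputable def vand (D n : ℕ) : Matrix (MultiIdx D n) (MultiIdx D n) ℝ :=
  Matrix.of fun α β : MultiIdx D n => ∏ i, ((β.1 i : ℝ)) ^ (α.1 i)

/-!
The multinomial theorem for the `n`-th power of `1 + β₁x₁ + ⋯ + β_D x_D` gives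
`(⟨β,x⟩ + 1)^n = ∑_α c_α V_{α,β} x^α`, with multinomial coefficients `c_α ≥ 1`.
Inverting `V` yields `x^δ = ∑_β ((V⁻¹)_{β,δ} / c_δ) (⟨β,x⟩ + 1)^n`, and `c_δ ≥ 1` bounds the
`ℓ¹` norm of these coefficients by that of the column `δ` of `V⁻¹`.
-/

open Finset

namespace MultiIdx

variable {D n : ℕ}

def homogenize : MultiIdx D n ≃ (univ.piAntidiag n : Finset (Option (Fin D) → ℕ)) where
  toFun α := ⟨fun o => o.elim (n - ∑ i, α.1 i) α.1, by
    have := α.2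
    simp only [mem_piAntidiag, Fintype.sum_option, Option.elim, mem_univ, implies_true, and_true]
    omega⟩
  invFun k := ⟨fun i => k.1 (some i), by
    have := (mem_piAntidiag.mp k.2).1
    rw [Fintype.sum_option] at this
    beta_reduce
    omega⟩
  left_inv _ := rfl
  right_inv k := by
    have := (mem_piAntidiag.mp k.2).1
    rw [Fintype.sum_option] at this
    ext (_ | i)
    · show n - ∑ i, k.1 (some i) = k.1 none
      omega
    · rfl

lemma homogenize_some (α : MultiIdx D n) (i : Fin D) :
    (homogenize α).1 (some i) = α.1 i := rfl

/-- The multinomial coefficient `n! / ((n - |α|)! α₁! ⋯ α_D!)`. -/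
def multinomial (α : MultiIdx D n) : ℕ := Nat.multinomial univ (homogenize α).1

lemma one_le_multinomial (α : MultiIdx D n) : 1 ≤ α.multinomial := Nat.multinomial_pos _ _

lemma add_one_pow_eq_sum_vand (β : MultiIdx D n) (x : Fin D → ℝ) :
    ((∑ i, (β.1 i : ℝ) * x i) + 1) ^ n =
      ∑ α : MultiIdx D n, (α.multinomial * vand D n α β) * ∏ i, x i ^ α.1 i := by
  have hsum : (∑ i, (β.1 i : ℝ) * x i) + 1 =
      ∑ o : Option (Fin D), o.elim 1 fun i => (β.1 i : ℝ) * x i := by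
    rw [Fintype.sum_option, add_comm]; rfl
  rw [hsum, sum_pow_eq_sum_piAntidiag, ← sum_coe_sort, ← homogenize.sum_comp]
  refine sum_congr rfl fun α _ => ?_
  simp only [Fintype.prod_option, Option.elim, one_pow, one_mul, mul_pow, prod_mul_distrib,
    homogenize_some, multinomial, vand, Matrix.of_apply]
  ring

end MultiIdx

lemma Matrix.sum_inv_smul_eq_smul_of_eq_sum {ι R M : Type*} [Fintype ι] [DecidableEq ι]
    [CommRing R] [AddCommGroup M] [Module R M] {V : Matrix ι ι R} (hV : IsUnit V)
    (c : ι → R) (m p : ι → M) (hp : ∀ β, p β = ∑ α, (c α * V α β) • m α) (δ : ι) :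
    ∑ β, V⁻¹ β δ • p β = c δ • m δ := by
  have hVinv : V * V⁻¹ = 1 := V.mul_nonsing_inv ((V.isUnit_iff_isUnit_det).mp hV)
  calc ∑ β, V⁻¹ β δ • p β
      = ∑ α, (c α * ∑ β, V α β * V⁻¹ β δ) • m α := by
        simp only [hp, smul_sum, smul_smul, mul_sum, sum_smul]
        rw [sum_comm]
        exact sum_congr rfl fun _ _ => sum_congr rfl fun _ _ => by ring_nf
    _ = c δ • m δ := by
        simp only [← Matrix.mul_apply, hVinv, Matrix.one_apply, mul_ite, mul_one, mul_zero,
          ite_smul, zero_smul, sum_ite_eq', mem_univ, if_true]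

theorem monomial_in_span_of_powers_general (D n : ℕ)
    (hV : IsUnit (vand D n)) (δ : MultiIdx D n) :
    ∃ a : MultiIdx D n → ℝ,
      (∑ β, |a β|) ≤
        Finset.univ.sup' Finset.univ_nonempty
          (fun β' : MultiIdx D n => ∑ α, |(vand D n)⁻¹ α β'|) ∧
      ∀ x : Fin D → ℝ,
        ∏ i, (x i) ^ (δ.1 i) =
          ∑ β : MultiIdx D n, a β * ((∑ i, (β.1 i : ℝ) * x i) + 1) ^ n := by
  have hc : (1 : ℝ) ≤ δ.multinomial := by exact_mod_cast δ.one_le_multinomial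
  refine ⟨fun β => (vand D n)⁻¹ β δ / δ.multinomial, ?_, fun x => ?_⟩
  · calc ∑ β, |(vand D n)⁻¹ β δ / δ.multinomial| ≤ ∑ β, |(vand D n)⁻¹ β δ| :=
          sum_le_sum fun β _ => by
            rw [abs_div, abs_of_pos (show (0 : ℝ) < δ.multinomial by linarith)]
            exact div_le_self (abs_nonneg _) hc
      _ ≤ _ := le_sup' (fun β' => ∑ α, |(vand D n)⁻¹ α β'|) (mem_univ δ)
  · have hδ := Matrix.sum_inv_smul_eq_smul_of_eq_sum hV (fun α => (α.multinomial : ℝ))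
      (fun α => ∏ i, x i ^ α.1 i) (fun β => ((∑ i, (β.1 i : ℝ) * x i) + 1) ^ n)
      (fun β => MultiIdx.add_one_pow_eq_sum_vand β x) δ
    simp only [smul_eq_mul] at hδ
    simp only [div_mul_eq_mul_div, ← sum_div, hδ]
    field_simp

/-- Every monomial `x^δ` of total degree at most `n` is a linear combination, with
`ℓ¹`-bounded coefficients, of the functions `x ↦ (⟨β,x⟩+1)^n`, `β ∈ B`. -/
theorem monomial_in_span_of_powers (D n : ℕ) (hn : 1 ≤ n)
    (hV : IsUnit (vand D n)) (δ : MultiIdx D n) :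
    ∃ a : MultiIdx D n → ℝ,
      (∑ β, |a β|) ≤
        Finset.univ.sup' Finset.univ_nonempty
          (fun β' : MultiIdx D n => ∑ α, |(vand D n)⁻¹ α β'|) ∧
      ∀ x : Fin D → ℝ,
        ∏ i, (x i) ^ (δ.1 i) =
          ∑ β : MultiIdx D n, a β * ((∑ i, (β.1 i : ℝ) * x i) + 1) ^ n :=
  monomial_in_span_of_powers_general D n hV δ
end

section
/- For every pair of multi-indices β, γ ∈ ℕ^d: Y^β · Y^γ = (Ψ_β Φ_βᵀ Ψ_γ) · Φ_γᵀ. In particular, the pair of matrices (Ψ_β Φ_βᵀ Ψ_γ, Φ_γ) is a node factorization of the single head Y^β Y^γ of the 2-FWL update step, so each head of the 2-FWL update applied to a node-factorized tensor is again node-factorized by explicit polynomial feature maps. -/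
open scoped BigOperators Matrix

/-- Multi-indices `ν ∈ ℕ^D` with `∑ₖ νₖ = n`. -/
def ExactIdx (D n : ℕ) : Type := {ν : Fin D → ℕ // ∑ k, ν k = n}

noncomputable instance (D n : ℕ) : Fintype (ExactIdx D n) :=
  Fintype.ofInjective
    (fun ν : ExactIdx D n => fun k => (⟨ν.1 k, by
      have h1 : ν.1 k ≤ ∑ j, ν.1 j :=
        Finset.single_le_sum (fun _ _ => Nat.zero_le _) (Finset.mem_univ k)
      have h2 := ν.2
      omega⟩ : Fin (n + 1)))
    (fun ν₁ ν₂ h => Subtype.ext (funext fun k => congrArg Fin.val (congrFun h k)))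

/-- The entrywise multi-power `Y^β` of the tensor `Y`. -/
noncomputable def Ypow {n d : ℕ} (β : Fin d → ℕ) (Y : Fin n → Fin n → Fin d → ℝ) :
    Matrix (Fin n) (Fin n) ℝ :=
  Matrix.of fun i j => ∏ l, (Y i j l) ^ (β l)

/-- The polynomial-kernel feature map matrix
`(Ψ_β)_{i,ν} = ∏ₗ √(βₗ!/∏ₖ ν_{l,k}!) ∏ₖ (w_i^l)ₖ^{ν_{l,k}}`. -/
noncomputable def featMap {n d : ℕ} (D : Fin d → ℕ) (β : Fin d → ℕ)
    (w : Fin n → ∀ l : Fin d, Fin (D l) → ℝ) :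
    Matrix (Fin n) (∀ l : Fin d, ExactIdx (D l) (β l)) ℝ :=
  Matrix.of fun i ν =>
    ∏ l, (Real.sqrt (((β l).factorial : ℝ) / ∏ k, (((ν l).1 k).factorial : ℝ)) *
      ∏ k, (w i l k) ^ ((ν l).1 k))

/-! By the multinomial theorem, `⟨s_i^l, t_j^l⟩ ^ β_l = ∑_ν (β_l! / ∏ₖ ν_k!) ∏ₖ (s_i^l t_j^l)ₖ^{ν_k}`;
splitting each coefficient as `√c · √c` between the two nodes and expanding the product over `l`
gives `Ψ_β Φ_βᵀ = Y^β`. The theorem is then associativity of the matrix product. -/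

open Finset

lemma sum_exactIdx_eq_sum_piAntidiag {M : Type*} [AddCommMonoid M] {D m : ℕ}
    (f : (Fin D → ℕ) → M) :
    ∑ ν : ExactIdx D m, f ν.1 = ∑ ν ∈ piAntidiag univ m, f ν :=
  (sum_subtype _ (fun ν => by simp [mem_piAntidiag]) f).symm

lemma sum_pow_eq_sum_exactIdx {R : Type*} [CommSemiring R] {D : ℕ} (x : Fin D → R) (m : ℕ) :
    (∑ k, x k) ^ m = ∑ ν : ExactIdx D m, (Nat.multinomial univ ν.1 : R) * ∏ k, x k ^ ν.1 k := by
  rw [sum_pow_eq_sum_piAntidiag, sum_exactIdx_eq_sum_piAntidiag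
    (fun ν => (Nat.multinomial univ ν : R) * ∏ k, x k ^ ν k)]

lemma cast_multinomial_exactIdx {D m : ℕ} (ν : ExactIdx D m) :
    (Nat.multinomial univ ν.1 : ℝ) = (m.factorial : ℝ) / ∏ k, ((ν.1 k).factorial : ℝ) := by
  have hspec := Nat.multinomial_spec univ ν.1
  rw [ν.2] at hspec
  rw [eq_div_iff (by positivity), ← hspec]
  push_cast
  ring

lemma sqrt_mul_prod_pow_mul_sqrt_mul_prod_pow {D : ℕ} {c : ℝ} (hc : 0 ≤ c) (ν : Fin D → ℕ)
    (a b : Fin D → ℝ) :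
    (√c * ∏ k, a k ^ ν k) * (√c * ∏ k, b k ^ ν k) = c * ∏ k, (a k * b k) ^ ν k := by
  rw [mul_mul_mul_comm, Real.mul_self_sqrt hc, ← prod_mul_distrib]
  simp only [mul_pow]

lemma featMap_mul_featMap_transpose {n d : ℕ} (D : Fin d → ℕ) (β : Fin d → ℕ)
    (s t : Fin n → ∀ l : Fin d, Fin (D l) → ℝ) :
    featMap D β s * (featMap D β t)ᵀ = Ypow β (fun i j l => ∑ k, s i l k * t j l k) := by
  ext i j
  symm
  calc ∏ l, (∑ k, s i l k * t j l k) ^ β l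
      = ∏ l, ∑ ν : ExactIdx (D l) (β l), ((β l).factorial / ∏ k, ((ν.1 k).factorial : ℝ)) *
          ∏ k, (s i l k * t j l k) ^ ν.1 k := by
        simp only [sum_pow_eq_sum_exactIdx, cast_multinomial_exactIdx]
    _ = ∑ ν : ∀ l, ExactIdx (D l) (β l), ∏ l, ((β l).factorial /
          ∏ k, (((ν l).1 k).factorial : ℝ)) * ∏ k, (s i l k * t j l k) ^ (ν l).1 k :=
        Fintype.prod_sum _
    _ = (featMap D β s * (featMap D β t)ᵀ) i j := by
        simp only [Matrix.mul_apply, featMap, Matrix.transpose_apply, Matrix.of_apply,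
          ← prod_mul_distrib]
        exact sum_congr rfl fun ν _ => prod_congr rfl fun l _ =>
          (sqrt_mul_prod_pow_mul_sqrt_mul_prod_pow (by positivity) _ _ _).symm

theorem fwl_head_factorization_general (n d : ℕ) (D : Fin d → ℕ)
    (β γ : Fin d → ℕ) (s t : Fin n → ∀ l : Fin d, Fin (D l) → ℝ) :
    Ypow β (fun i j l => ∑ k, s i l k * t j l k) *
        Ypow γ (fun i j l => ∑ k, s i l k * t j l k)
      = (featMap D β s * (featMap D β t)ᵀ * featMap D γ s) * (featMap D γ t)ᵀ := by
  rw [← featMap_mul_featMap_transpose D β s t, ← featMap_mul_featMap_transpose D γ s t,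
    Matrix.mul_assoc _ (featMap D γ s)]

/-- `Y^β Y^γ = (Ψ_β Φ_βᵀ Ψ_γ) Φ_γᵀ`: each head of the 2-FWL update step applied to a
node-factorized tensor is again node-factorized by explicit polynomial feature maps. -/
theorem fwl_head_factorization (n d : ℕ) (hn : 1 ≤ n) (D : Fin d → ℕ)
    (β γ : Fin d → ℕ) (s t : Fin n → ∀ l : Fin d, Fin (D l) → ℝ) :
    Ypow β (fun i j l => ∑ k, s i l k * t j l k) *
        Ypow γ (fun i j l => ∑ k, s i l k * t j l k)
      = (featMap D β s * (featMap D β t)ᵀ * featMap D γ s) * (featMap D γ t)ᵀ :=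
  fwl_head_factorization_general n d D β γ s t
end

section
/- For every pair (i,j) and every pair of multi-indices β, γ ∈ ℕ^d, putting α = (β, γ) ∈ ℕ^{2d}, the α-th power-sum multi-symmetric polynomial of the 2-FWL neighborhood multiset of (i,j) equals the (i,j) entry of the matrix product Y^β Y^γ: ∑_{k=1}^n z_k^α = ∑_{k=1}^n (∏_{l=1}^d Y_{i,k,l}^{β_l}) · (∏_{l=1}^d Y_{k,j,l}^{γ_l}) = (Y^β · Y^γ)_{i,j}. Hence every coordinate of the power-sum multi-symmetric polynomial encoding used in the 2-FWL update can be computed by matrix multiplication of entrywise multi-powers of Y. -/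
open scoped BigOperators Matrix

/-- The α-th power-sum multi-symmetric polynomial of the 2-FWL neighborhood multiset of a
pair `(i,j)`, with `z_k = [Y_{i,k}, Y_{k,j}] ∈ ℝ^{2d}` and `α = (β,γ) ∈ ℕ^{2d}`, equals the
`(i,j)` entry of the matrix product `Y^β Y^γ` of entrywise multi-powers of `Y`. -/
theorem fwl_encoding_via_matmul (n d : ℕ) (hn : 1 ≤ n)
    (Y : Fin n → Fin n → Fin d → ℝ) (β γ : Fin d → ℕ) (i j : Fin n) :
    (∑ k, ∏ m, (Fin.append (Y i k) (Y k j) m) ^ (Fin.append β γ m)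
        = ∑ k, (∏ l, (Y i k l) ^ (β l)) * (∏ l, (Y k j l) ^ (γ l))) ∧
    (∑ k, ∏ m, (Fin.append (Y i k) (Y k j) m) ^ (Fin.append β γ m)
        = ((Matrix.of fun a b => ∏ l, (Y a b l) ^ (β l)) *
           (Matrix.of fun a b => ∏ l, (Y a b l) ^ (γ l))) i j) := by
  have h : ∑ k, ∏ m, (Fin.append (Y i k) (Y k j) m) ^ (Fin.append β γ m)
      = ∑ k, (∏ l, (Y i k l) ^ (β l)) * (∏ l, (Y k j l) ^ (γ l)) := by
    refine Finset.sum_congr rfl fun k _ => ?_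
    rw [Fin.prod_univ_add (f := fun m : Fin (d + d) =>
      (Fin.append (Y i k) (Y k j) m) ^ (Fin.append β γ m))]
    simp [Fin.append_left, Fin.append_right, ← Fin.natAdd_eq_addNat]
  exact ⟨h, h.trans (by simp [Matrix.mul_apply])⟩
end
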